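/- arXiv:2007.09984 — 2 statements merged into one kernel-verified Lean document; each statement's English description precedes it below -/
import Mathlib

section
/- Let p be a prime and ψ : ℚ_p → ℂ^× a nontrivial continuous additive character whose kernel is exactly ℤ_p, and let d^×z be the Haar measure on ℚ_p^× normalized so that ℤ_p^× has measure 1. Let n ≥ 1 be an integer and let Ψ : ℚ_p^× → ℂ be a function invariant under multiplication by 1 + p^n ℤ_p (i.e. Ψ(u x) = Ψ(x) for all u ∈ 1 + p^n ℤ_p and x ∈ ℚ_p^×; such a Ψ is locally constant). Then for every a ∈ ℤ_p^× and every y ∈ ℚ_p^×, one has ∫_{a + p^n ℤ_p} Ψ(p^{−n} y z) ψ(p^{−n} y (a − z)) d^×z = (1 − p^{−1})^{−1} p^{−n} Ψ(p^{−n} y a) · 1_{ℤ_p}(y). -/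
/-!
For `‖y‖ ≤ 1` the integrand is constant, equal to `Ψ(p⁻ⁿya)`, on the ball `a + pⁿℤ_p`, and this
ball has measure `1 / φ(pⁿ)`: the `φ(pⁿ)` balls `j + pⁿℤ_p` with `p ∤ j` tile `ℤ_p^×` and are
multiplicative translates of one another. For `‖y‖ > 1`, multiplying the variable by a suitable
`u ∈ 1 + pⁿℤ_p` preserves the ball, the measure and `Ψ`, but multiplies the integrand by
`ψ(-p⁻¹) ≠ 1`, so the integral vanishes.
-/

open MeasureTheory Metric

section

variable {α 𝕜 : Type*} [MeasurableSpace α] [RCLike 𝕜]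

theorem setIntegral_eq_zero_of_comp_eq_mul {μ : Measure α} {T : α → α}
    (hT : MeasurableEmbedding T) (hTμ : μ.map T = μ) {s : Set α} (hs : MeasurableSet s)
    (hTs : T ⁻¹' s = s) {f : α → 𝕜} {χ : 𝕜} (hχ : χ ≠ 1) (hf : ∀ x ∈ s, f (T x) = χ * f x) :
    ∫ x in s, f x ∂μ = 0 := by
  have h : ∫ x in s, f x ∂μ = χ * ∫ x in s, f x ∂μ := calc
    ∫ x in s, f x ∂μ = ∫ x in s, f x ∂μ.map T := by rw [hTμ]
    _ = ∫ x in s, f (T x) ∂μ := by rw [hT.setIntegral_map, hTs]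
    _ = ∫ x in s, χ * f x ∂μ := setIntegral_congr_fun hs hf
    _ = χ * ∫ x in s, f x ∂μ := integral_const_mul χ _
  have h' : (1 - χ) * ∫ x in s, f x ∂μ = 0 := by linear_combination h
  exact (mul_eq_zero.1 h').resolve_left (sub_ne_zero.2 hχ.symm)

variable {K : Type*} [NormedField K]

theorem measure_closedBall_eq_of_norm_eq_one [MeasurableSpace K] [BorelSpace K] {ν : Measure K}
    (hν : ∀ a : K, a ≠ 0 → ν.map (a * ·) = ν) {t : K} (ht : ‖t‖ = 1) (r : ℝ) :
    ν (closedBall t r) = ν (closedBall 1 r) := by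
  have ht0 : t ≠ 0 := norm_ne_zero_iff.1 (ht ▸ one_ne_zero)
  have hpre : (t * ·) ⁻¹' closedBall t r = closedBall 1 r := by
    ext x
    simp [dist_eq_norm, ← mul_sub_one, ht]
  calc ν (closedBall t r) = ν.map (t * ·) (closedBall t r) := by rw [hν t ht0]
    _ = ν (closedBall 1 r) := by
      rw [Measure.map_apply (measurable_const_mul t) measurableSet_closedBall, hpre]

theorem mul_mem_closedBall [IsUltrametricDist K] {a u z : K} {r : ℝ} (ha : ‖a‖ ≤ 1)
    (hu : ‖u - 1‖ ≤ r) (hr : r ≤ 1) (hz : z ∈ closedBall a r) : u * z ∈ closedBall a r := by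
  have hu1 : ‖u‖ ≤ 1 := by
    simpa using
      (IsUltrametricDist.norm_add_le_max (u - 1) 1).trans (max_le (hu.trans hr) norm_one.le)
  rw [mem_closedBall, dist_eq_norm] at hz ⊢
  calc ‖u * z - a‖ = ‖u * (z - a) + (u - 1) * a‖ := by ring_nf
    _ ≤ max ‖u * (z - a)‖ ‖(u - 1) * a‖ := IsUltrametricDist.norm_add_le_max _ _
    _ ≤ r := by
      rw [norm_mul, norm_mul]
      exact max_le (by nlinarith [norm_nonneg u, norm_nonneg (z - a)])
        (by nlinarith [norm_nonneg (u - 1), norm_nonneg a])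

theorem mul_mem_closedBall_iff [IsUltrametricDist K] {a u z : K} {r : ℝ} (ha : ‖a‖ ≤ 1)
    (hu : ‖u - 1‖ ≤ r) (hr : r < 1) : u * z ∈ closedBall a r ↔ z ∈ closedBall a r := by
  have hu1 : ‖u‖ = 1 := by
    have h := IsUltrametricDist.norm_add_eq_max_of_norm_ne_norm (x := u - 1) (y := 1)
      (by rw [norm_one]; linarith)
    rwa [sub_add_cancel, norm_one, max_eq_right (by linarith)] at h
  have hu0 : u ≠ 0 := norm_ne_zero_iff.1 (hu1 ▸ one_ne_zero)
  have hu' : ‖u⁻¹ - 1‖ ≤ r := calc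
    ‖u⁻¹ - 1‖ = ‖u * (u⁻¹ - 1)‖ := by rw [norm_mul, hu1, one_mul]
    _ = ‖u - 1‖ := by rw [mul_sub, mul_inv_cancel₀ hu0, mul_one, norm_sub_rev]
    _ ≤ r := hu
  refine ⟨fun h => ?_, mul_mem_closedBall ha hu hr.le⟩
  simpa [inv_mul_cancel_left₀ hu0] using mul_mem_closedBall ha hu' hr.le h

end

namespace Padic

variable {p : ℕ} [Fact p.Prime]

theorem exists_natCast_mem_closedBall {x : ℚ_[p]} (hx : ‖x‖ ≤ 1) (n : ℕ) :
    ∃ j < p ^ n, x ∈ closedBall (j : ℚ_[p]) ((p : ℝ) ^ (-(n : ℤ))) := by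
  let z : ℤ_[p] := ⟨x, hx⟩
  refine ⟨z.appr n, z.appr_lt n, ?_⟩
  rw [mem_closedBall, dist_eq_norm]
  exact_mod_cast ((z - z.appr n).norm_le_pow_iff_mem_span_pow n).2 (z.appr_spec n)

theorem eq_of_natCast_mem_closedBall {j k n : ℕ} (hj : j < p ^ n) (hk : k < p ^ n)
    (h : (j : ℚ_[p]) ∈ closedBall (k : ℚ_[p]) ((p : ℝ) ^ (-(n : ℤ)))) : j = k := by
  rw [mem_closedBall, dist_eq_norm, ← Int.cast_natCast, ← Int.cast_natCast k, ← Int.cast_sub,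
    norm_int_le_pow_iff_dvd] at h
  exact (Nat.ModEq.eq_of_lt_of_lt (Nat.modEq_of_dvd (by exact_mod_cast h)) hk hj).symm

theorem pairwiseDisjoint_closedBall_natCast (n : ℕ) :
    (Finset.range (p ^ n) : Set ℕ).PairwiseDisjoint
      fun j => closedBall (j : ℚ_[p]) ((p : ℝ) ^ (-(n : ℤ))) := by
  intro j hj k hk hjk
  refine (IsUltrametricDist.closedBall_eq_or_disjoint _ _ _).resolve_left fun h => hjk ?_
  exact eq_of_natCast_mem_closedBall (Finset.mem_range.1 hj) (Finset.mem_range.1 hk)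
    (h ▸ mem_closedBall_self (by positivity))

theorem sphere_zero_one_eq_biUnion_closedBall {n : ℕ} (hn : 1 ≤ n) :
    sphere (0 : ℚ_[p]) 1 =
      ⋃ j ∈ {j ∈ Finset.range (p ^ n) | (p ^ n).Coprime j},
        closedBall (j : ℚ_[p]) ((p : ℝ) ^ (-(n : ℤ))) := by
  have hr : (p : ℝ) ^ (-(n : ℤ)) < 1 :=
    zpow_lt_one_of_neg₀ (by exact_mod_cast (Fact.out : p.Prime).one_lt) (by omega)
  have hunit (j : ℕ) : (p ^ n).Coprime j ↔ ‖(j : ℚ_[p])‖ = 1 := by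
    rw [Nat.coprime_pow_left_iff (by omega), norm_natCast_eq_one_iff]
  ext x
  simp only [mem_sphere_zero_iff_norm, Set.mem_iUnion, Finset.mem_filter, Finset.mem_range,
    exists_prop, hunit, mem_closedBall, dist_eq_norm]
  constructor
  · intro hx
    obtain ⟨j, hj, hxj⟩ := exists_natCast_mem_closedBall hx.le n
    exact ⟨j, ⟨hj, hx ▸ (norm_eq_of_norm_sub_lt_left (hxj.trans_lt (hx ▸ hr))).symm⟩, hxj⟩
  · rintro ⟨j, ⟨-, hj⟩, hxj⟩
    exact hj ▸ norm_eq_of_norm_sub_lt_right (hxj.trans_lt (hj ▸ hr))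

theorem inv_totient_prime_pow {K : Type*} [Field K] [CharZero K] {n : ℕ} (hn : 1 ≤ n) :
    ((Nat.totient (p ^ n) : ℕ) : K)⁻¹ = (1 - (p : K)⁻¹)⁻¹ * (p : K) ^ (-(n : ℤ)) := by
  have hp := (Fact.out : p.Prime)
  rw [Nat.totient_prime_pow hp (by omega), zpow_neg, zpow_natCast]
  have hp0 : (p : K) ≠ 0 := by exact_mod_cast hp.ne_zero
  have hp1 : (p : K) - 1 ≠ 0 := sub_ne_zero.2 (by exact_mod_cast hp.ne_one)
  obtain ⟨m, rfl⟩ := Nat.exists_eq_add_of_le' hn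
  push_cast [Nat.cast_sub hp.one_le]
  field_simp
  ring

theorem zpow_neg_le_inv {n : ℕ} (hn : 1 ≤ n) : (p : ℝ) ^ (-(n : ℤ)) ≤ (p : ℝ)⁻¹ := by
  rw [← zpow_neg_one]
  exact zpow_le_zpow_right₀ (by exact_mod_cast (Fact.out : p.Prime).one_le) (by omega)

theorem norm_inv_p_pow_mul (n : ℕ) (y : ℚ_[p]) :
    ‖((p : ℚ_[p]) ^ n)⁻¹ * y‖ = ‖y‖ / (p : ℝ) ^ (-(n : ℤ)) := by
  rw [norm_mul, norm_inv, norm_p_pow, inv_mul_eq_div]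

variable [MeasurableSpace ℚ_[p]] [BorelSpace ℚ_[p]] {ν : Measure ℚ_[p]} {ψ Ψ : ℚ_[p] → ℂ} {n : ℕ}
  {a y : ℚ_[p]}

theorem measure_closedBall_one (hν : ∀ a : ℚ_[p], a ≠ 0 → ν.map (a * ·) = ν)
    (hν_one : ν (sphere 0 1) = 1) (hn : 1 ≤ n) :
    ν (closedBall 1 ((p : ℝ) ^ (-(n : ℤ)))) = (Nat.totient (p ^ n) : ENNReal)⁻¹ := by
  have hsum : (Nat.totient (p ^ n) : ENNReal) * ν (closedBall 1 ((p : ℝ) ^ (-(n : ℤ)))) = 1 := by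
    rw [← hν_one, sphere_zero_one_eq_biUnion_closedBall hn,
      measure_biUnion_finset ((pairwiseDisjoint_closedBall_natCast n).subset
        (Finset.coe_subset.2 (Finset.filter_subset _ _)))
        fun _ _ => measurableSet_closedBall, Finset.sum_congr rfl fun j hj => ?_,
      Finset.sum_const, nsmul_eq_mul, Nat.totient_eq_card_coprime]
    refine measure_closedBall_eq_of_norm_eq_one hν (norm_natCast_eq_one_iff.2 ?_) _
    exact (Finset.mem_filter.1 hj).2.coprime_dvd_left (dvd_pow_self p (by omega))
  exact ENNReal.eq_inv_of_mul_eq_one_left (by rwa [mul_comm])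

theorem setIntegral_closedBall_of_norm_le_one
    (hν : ∀ a : ℚ_[p], a ≠ 0 → ν.map (a * ·) = ν) (hν_one : ν (sphere 0 1) = 1)
    (hψ_ker : ∀ x : ℚ_[p], ψ x = 1 ↔ ‖x‖ ≤ 1) (hn : 1 ≤ n)
    (hΨ_inv : ∀ u x : ℚ_[p], ‖u - 1‖ ≤ (p : ℝ) ^ (-(n : ℤ)) → Ψ (u * x) = Ψ x)
    (ha : ‖a‖ = 1) (hy : ‖y‖ ≤ 1) :
    ∫ z in closedBall a ((p : ℝ) ^ (-(n : ℤ))),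
        Ψ (((p : ℚ_[p]) ^ n)⁻¹ * y * z) * ψ (((p : ℚ_[p]) ^ n)⁻¹ * y * (a - z)) ∂ν
      = (1 - (p : ℂ)⁻¹)⁻¹ * (p : ℂ) ^ (-(n : ℤ)) * Ψ (((p : ℚ_[p]) ^ n)⁻¹ * y * a) := by
  set c := ((p : ℚ_[p]) ^ n)⁻¹ * y
  have ha0 : a ≠ 0 := norm_ne_zero_iff.1 (ha ▸ one_ne_zero)
  have hr : 0 < (p : ℝ) ^ (-(n : ℤ)) := zpow_pos (by exact_mod_cast (Fact.out : p.Prime).pos) _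
  have hconst : Set.EqOn (fun z => Ψ (c * z) * ψ (c * (a - z))) (fun _ => Ψ (c * a))
      (closedBall a ((p : ℝ) ^ (-(n : ℤ)))) := by
    intro z hz
    rw [mem_closedBall, dist_eq_norm] at hz
    have hΨz : Ψ (c * z) = Ψ (c * a) := by
      have h := hΨ_inv (z * a⁻¹) (c * a) (by
        rwa [← mul_inv_cancel₀ ha0, ← sub_mul, norm_mul, norm_inv, ha, inv_one, mul_one])
      rwa [show z * a⁻¹ * (c * a) = c * z by field_simp] at h
    have hψz : ψ (c * (a - z)) = 1 := by
      refine (hψ_ker _).2 ?_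
      rw [norm_mul, norm_inv_p_pow_mul, norm_sub_rev, div_mul_eq_mul_div, div_le_one hr]
      exact (mul_le_of_le_one_left (norm_nonneg _) hy).trans hz
    simp only [hΨz, hψz, mul_one]
  rw [setIntegral_congr_fun measurableSet_closedBall hconst, setIntegral_const, measureReal_def,
    measure_closedBall_eq_of_norm_eq_one hν ha, measure_closedBall_one hν hν_one hn,
    ENNReal.toReal_inv, ENNReal.toReal_natCast, Complex.real_smul, Complex.ofReal_inv,
    Complex.ofReal_natCast, inv_totient_prime_pow hn]

theorem setIntegral_closedBall_of_one_lt_norm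
    (hν : ∀ a : ℚ_[p], a ≠ 0 → ν.map (a * ·) = ν)
    (hψ_add : ∀ x y : ℚ_[p], ψ (x + y) = ψ x * ψ y)
    (hψ_ker : ∀ x : ℚ_[p], ψ x = 1 ↔ ‖x‖ ≤ 1) (hn : 1 ≤ n)
    (hΨ_inv : ∀ u x : ℚ_[p], ‖u - 1‖ ≤ (p : ℝ) ^ (-(n : ℤ)) → Ψ (u * x) = Ψ x)
    (ha : ‖a‖ = 1) (hy : 1 < ‖y‖) :
    ∫ z in closedBall a ((p : ℝ) ^ (-(n : ℤ))),
        Ψ (((p : ℚ_[p]) ^ n)⁻¹ * y * z) * ψ (((p : ℚ_[p]) ^ n)⁻¹ * y * (a - z)) ∂ν = 0 := by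
  set c := ((p : ℚ_[p]) ^ n)⁻¹ * y
  set r := (p : ℝ) ^ (-(n : ℤ))
  have hp : (1 : ℝ) < p := by exact_mod_cast (Fact.out : p.Prime).one_lt
  have hr : 0 < r := zpow_pos (by linarith) _
  have hpr : p * r ≤ 1 := by
    rw [← le_div_iff₀' (by linarith), one_div]; exact zpow_neg_le_inv hn
  have ha0 : a ≠ 0 := norm_ne_zero_iff.1 (ha ▸ one_ne_zero)
  have hyp : p ≤ ‖y‖ := by
    simpa using (norm_le_pow_iff_norm_lt_pow_add_one y 0).not.1 hy.not_ge
  have hc0 : c ≠ 0 := norm_ne_zero_iff.1 (by rw [norm_inv_p_pow_mul]; positivity)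
  -- `u` is chosen so that `c * a * (u - 1) = p⁻¹`, which lies just outside the kernel of `ψ`.
  set u := 1 + ((p : ℚ_[p]) * (c * a))⁻¹
  have hu : ‖u - 1‖ ≤ r := by
    rw [add_sub_cancel_left, norm_inv, norm_mul, norm_mul, norm_p, ha, mul_one,
      norm_inv_p_pow_mul, inv_le_comm₀ (by positivity) hr]
    calc r⁻¹ = (p : ℝ)⁻¹ * (p / r) := by field_simp
      _ ≤ (p : ℝ)⁻¹ * (‖y‖ / r) := by gcongr
  have hu0 : u ≠ 0 := by
    rintro h
    rw [h, zero_sub, norm_neg, norm_one] at hu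
    nlinarith
  have hχ : ψ (-(p : ℚ_[p])⁻¹) ≠ 1 := by
    rw [Ne, hψ_ker, norm_neg, norm_inv, norm_p, inv_inv, not_le]
    exact hp
  refine setIntegral_eq_zero_of_comp_eq_mul (measurableEmbedding_mulLeft₀ hu0) (hν u hu0)
    measurableSet_closedBall (Set.ext fun z => mul_mem_closedBall_iff ha.le hu ?_) hχ
    fun z hz => ?_
  · nlinarith
  · rw [mem_closedBall, dist_eq_norm] at hz
    have hsplit : c * (a - u * z) = c * (a - z) + -(p : ℚ_[p])⁻¹ + -((z - a) * (p * a)⁻¹) := by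
      simp only [u]
      field_simp
      ring
    have hψz : ψ (-((z - a) * (p * a)⁻¹)) = 1 := by
      rw [hψ_ker, norm_neg, norm_mul, norm_inv, norm_mul, norm_p, ha, mul_one, inv_inv]
      nlinarith
    rw [mul_left_comm, hΨ_inv u _ hu, hsplit, hψ_add, hψ_add, hψz]
    ring

end Padic

theorem key_local_computation_general
    (p : ℕ) [Fact p.Prime] [MeasurableSpace ℚ_[p]] [BorelSpace ℚ_[p]]
    -- Haar measure on ℚ_p^× with vol(ℤ_p^×) = 1
    (ν : Measure ℚ_[p])
    (hν_inv : ∀ a : ℚ_[p], a ≠ 0 → Measure.map (fun x => a * x) ν = ν)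
    (hν_one : ν {x : ℚ_[p] | ‖x‖ = 1} = 1)
    -- additive character with kernel ℤ_p
    (ψ : ℚ_[p] → ℂ)
    (hψ_add : ∀ x y : ℚ_[p], ψ (x + y) = ψ x * ψ y)
    (hψ_ker : ∀ x : ℚ_[p], ψ x = 1 ↔ ‖x‖ ≤ 1)
    -- a function invariant under multiplication by 1 + pⁿℤ_p
    (n : ℕ) (hn : 1 ≤ n) (Ψ : ℚ_[p] → ℂ)
    (hΨ_inv : ∀ u x : ℚ_[p], ‖u - 1‖ ≤ (p : ℝ) ^ (-(n : ℤ)) → Ψ (u * x) = Ψ x) :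
    ∀ a : ℚ_[p], ‖a‖ = 1 → ∀ y : ℚ_[p], y ≠ 0 →
      ∫ z in {z : ℚ_[p] | ‖z - a‖ ≤ (p : ℝ) ^ (-(n : ℤ))},
          Ψ (((p : ℚ_[p]) ^ n)⁻¹ * y * z) * ψ (((p : ℚ_[p]) ^ n)⁻¹ * y * (a - z)) ∂ν
        = (1 - (p : ℂ)⁻¹)⁻¹ * (p : ℂ) ^ (-(n : ℤ)) *
            Ψ (((p : ℚ_[p]) ^ n)⁻¹ * y * a) *
            (if ‖y‖ ≤ 1 then 1 else 0) := by
  intro a ha y _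
  have hν_sphere : ν (sphere 0 1) = 1 := by simpa [sphere, dist_eq_norm] using hν_one
  have hball : {z : ℚ_[p] | ‖z - a‖ ≤ (p : ℝ) ^ (-(n : ℤ))} =
      closedBall a ((p : ℝ) ^ (-(n : ℤ))) := by
    ext; simp [dist_eq_norm]
  rw [hball]
  split_ifs with hy
  · rw [mul_one]
    exact Padic.setIntegral_closedBall_of_norm_le_one hν_inv hν_sphere hψ_ker hn hΨ_inv ha hy
  · rw [mul_zero]
    exact Padic.setIntegral_closedBall_of_one_lt_norm hν_inv hψ_add hψ_ker hn hΨ_inv ha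
      (not_le.1 hy)

/-- **Key computation at the end of Section 4.4.** Let `Ψ : ℚ_p^× → ℂ` be invariant
under multiplication by `1 + pⁿℤ_p` (`n ≥ 1`).  Then for every `a ∈ ℤ_p^×` and every
`y ∈ ℚ_p^×`,
`∫_{a + pⁿℤ_p} Ψ(p⁻ⁿyz) ψ(p⁻ⁿy(a - z)) d^×z = (1 - p⁻¹)⁻¹ p⁻ⁿ Ψ(p⁻ⁿya) · 1_{ℤ_p}(y)`.
Here `ψ` is a nontrivial additive character of `ℚ_p` with kernel exactly `ℤ_p` and
`ν` is the Haar measure of `ℚ_p^×` with `ν(ℤ_p^×) = 1`. -/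
theorem key_local_computation
    (p : ℕ) [Fact p.Prime] [MeasurableSpace ℚ_[p]] [BorelSpace ℚ_[p]]
    -- Haar measure on ℚ_p^× with vol(ℤ_p^×) = 1
    (ν : Measure ℚ_[p]) [ν.Regular]
    (hν_inv : ∀ a : ℚ_[p], a ≠ 0 → Measure.map (fun x => a * x) ν = ν)
    (hν_zero : ν {0} = 0)
    (hν_one : ν {x : ℚ_[p] | ‖x‖ = 1} = 1)
    -- additive character with kernel ℤ_p
    (ψ : ℚ_[p] → ℂ) (hψ_cont : Continuous ψ)
    (hψ_add : ∀ x y : ℚ_[p], ψ (x + y) = ψ x * ψ y)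
    (hψ_ker : ∀ x : ℚ_[p], ψ x = 1 ↔ ‖x‖ ≤ 1)
    -- a function invariant under multiplication by 1 + pⁿℤ_p
    (n : ℕ) (hn : 1 ≤ n) (Ψ : ℚ_[p] → ℂ)
    (hΨ_inv : ∀ u x : ℚ_[p], ‖u - 1‖ ≤ (p : ℝ) ^ (-(n : ℤ)) → Ψ (u * x) = Ψ x) :
    ∀ a : ℚ_[p], ‖a‖ = 1 → ∀ y : ℚ_[p], y ≠ 0 →
      ∫ z in {z : ℚ_[p] | ‖z - a‖ ≤ (p : ℝ) ^ (-(n : ℤ))},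
          Ψ (((p : ℚ_[p]) ^ n)⁻¹ * y * z) * ψ (((p : ℚ_[p]) ^ n)⁻¹ * y * (a - z)) ∂ν
        = (1 - (p : ℂ)⁻¹)⁻¹ * (p : ℂ) ^ (-(n : ℤ)) *
            Ψ (((p : ℚ_[p]) ^ n)⁻¹ * y * a) *
            (if ‖y‖ ≤ 1 then 1 else 0) :=
  key_local_computation_general p ν hν_inv hν_one ψ hψ_add hψ_ker n hn Ψ hΨ_inv
end

section
/- Let p be a prime, ψ : ℚ_p → ℂ^× a nontrivial continuous additive character whose kernel is exactly ℤ_p, and α ∈ ℂ^×. Define φ_0, φ_1 : ℚ_p^× → ℂ by φ_0(y) = α^{−v_p(y)} · 1_{ℤ_p}(y) and φ_1(y) = v_p(y) α^{−v_p(y)} · 1_{ℤ_p}(y), and define the operator T_p on functions φ : ℚ_p^× → ℂ by (T_p φ)(y) = φ(p^{−1} y) + p^{−1} α² (∑_{c=0}^{p−1} ψ(c y)) · φ(p y). Then T_p(φ_0 + φ_1) = 2α (φ_0 + φ_1). -/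
open Classical

/-- The Kirillov-model vector `φ₀(y) = α^{-v_p(y)} · 1_{ℤ_p∖{0}}(y)` on `ℚ_p^×`. -/
noncomputable def kirillovPhi0 (p : ℕ) [Fact p.Prime] (α : ℂ) : ℚ_[p] → ℂ :=
  fun y => if y ≠ 0 ∧ ‖y‖ ≤ 1 then α ^ (-y.valuation) else 0

/-- The Kirillov-model vector `φ₁(y) = v_p(y) α^{-v_p(y)} · 1_{ℤ_p∖{0}}(y)` on `ℚ_p^×`. -/
noncomputable def kirillovPhi1 (p : ℕ) [Fact p.Prime] (α : ℂ) : ℚ_[p] → ℂ :=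
  fun y => if y ≠ 0 ∧ ‖y‖ ≤ 1 then (y.valuation : ℂ) * α ^ (-y.valuation) else 0

/-- The Hecke operator `T_p` on the Kirillov model:
`(T_p φ)(y) = φ(p⁻¹y) + p⁻¹ α² (∑_{c=0}^{p-1} ψ(cy)) · φ(py)`. -/
noncomputable def kirillovTp (p : ℕ) [Fact p.Prime] (ψ : ℚ_[p] → ℂ) (α : ℂ)
    (φ : ℚ_[p] → ℂ) : ℚ_[p] → ℂ :=
  fun y => φ ((p : ℚ_[p])⁻¹ * y) +
    (p : ℂ)⁻¹ * α ^ 2 * (∑ c ∈ Finset.range p, ψ ((c : ℚ_[p]) * y)) *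
      φ ((p : ℚ_[p]) * y)

/-! On `y ≠ 0` both `φ₀ + φ₁` and its two translates only depend on `v = v_p(y)` through
`g(v) = (v + 1) α^{-v} · 1_{v ≥ 0}`, the coefficient sequence of the double root `α⁻¹`, which
satisfies `g(v - 1) + α² g(v + 1) = 2α g(v)` for `v ≥ 0`. The character sum
`∑_{c < p} ψ(c y)` equals `p` when `y ∈ ℤ_p` and vanishes when `v = -1`, since then `ψ(y)` is
a nontrivial `p`-th root of unity; for `v ≤ -2` every term of `T_p(φ₀ + φ₁)(y)` vanishes. -/

noncomputable def newformCoeff (α : ℂ) (n : ℤ) : ℂ :=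
  if 0 ≤ n then (n + 1) * α ^ (-n) else 0

lemma newformCoeff_of_neg (α : ℂ) {n : ℤ} (hn : n < 0) : newformCoeff α n = 0 :=
  if_neg hn.not_ge

lemma newformCoeff_sub_one_add_mul (α : ℂ) (hα : α ≠ 0) (n : ℤ) :
    newformCoeff α (n - 1) + α ^ 2 * (if 0 ≤ n then 1 else 0) * newformCoeff α (n + 1)
      = 2 * α * newformCoeff α n := by
  unfold newformCoeff
  rcases lt_trichotomy n 0 with hn | rfl | hn
  · simp only [if_neg hn.not_ge, if_neg (show ¬ 0 ≤ n - 1 by omega)]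
    ring
  · norm_num
    field_simp
  · have hsub : α ^ (-(n - 1)) = α ^ (-n) * α := by
      rw [neg_sub, sub_eq_neg_add, zpow_add_one₀ hα]
    have hadd : α ^ (-(n + 1)) = α ^ (-n) * α⁻¹ := by
      rw [neg_add, zpow_add₀ hα, zpow_neg_one]
    simp only [show 0 ≤ n - 1 by omega, show 0 ≤ n + 1 by omega, hn.le, if_true, hsub, hadd]
    push_cast
    field_simp
    ring

section Padic

variable {p : ℕ} [Fact p.Prime]

lemma kirillovPhi0_add_kirillovPhi1 (α : ℂ) {y : ℚ_[p]} (hy : y ≠ 0) :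
    kirillovPhi0 p α y + kirillovPhi1 p α y = newformCoeff α y.valuation := by
  by_cases hv : 0 ≤ y.valuation
  · have hy1 : y ≠ 0 ∧ ‖y‖ ≤ 1 := ⟨hy, (Padic.norm_le_one_iff_val_nonneg y).2 hv⟩
    simp only [kirillovPhi0, kirillovPhi1, newformCoeff, if_pos hy1, if_pos hv]
    ring
  · have hy1 : ¬ (y ≠ 0 ∧ ‖y‖ ≤ 1) := fun h => hv ((Padic.norm_le_one_iff_val_nonneg y).1 h.2)
    simp [kirillovPhi0, kirillovPhi1, newformCoeff, hy1, hv]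

lemma Padic.valuation_p_mul {y : ℚ_[p]} (hy : y ≠ 0) :
    ((p : ℚ_[p]) * y).valuation = y.valuation + 1 := by
  rw [Padic.valuation_mul (NeZero.ne _) hy, Padic.valuation_p, add_comm]

lemma Padic.valuation_inv_p_mul {y : ℚ_[p]} (hy : y ≠ 0) :
    ((p : ℚ_[p])⁻¹ * y).valuation = y.valuation - 1 := by
  rw [Padic.valuation_mul (NeZero.ne _) hy, Padic.valuation_inv, Padic.valuation_p]
  ring

lemma sum_range_addChar_natCast_mul (ψ : AddChar ℚ_[p] ℂ)
    (hψ_ker : ∀ x : ℚ_[p], ψ x = 1 ↔ ‖x‖ ≤ 1) {y : ℚ_[p]} (hpy : ‖(p : ℚ_[p]) * y‖ ≤ 1) :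
    ∑ c ∈ Finset.range p, ψ (c * y) = if ‖y‖ ≤ 1 then (p : ℂ) else 0 := by
  simp only [← nsmul_eq_mul, AddChar.map_nsmul_eq_pow]
  split_ifs with hy
  · simp [(hψ_ker y).2 hy]
  · have hroot : ψ y ^ p = 1 := by
      rwa [← AddChar.map_nsmul_eq_pow, nsmul_eq_mul, hψ_ker]
    rw [geom_sum_eq (mt (hψ_ker y).1 hy), hroot, sub_self, zero_div]

end Padic

theorem Tp_eigenvector_phi0_add_phi1_general
    (p : ℕ) [Fact p.Prime]
    -- additive character with kernel ℤ_p
    (ψ : ℚ_[p] → ℂ)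
    (hψ_add : ∀ x y : ℚ_[p], ψ (x + y) = ψ x * ψ y)
    (hψ_ker : ∀ x : ℚ_[p], ψ x = 1 ↔ ‖x‖ ≤ 1)
    (α : ℂ) (hα : α ≠ 0) :
    ∀ y : ℚ_[p], y ≠ 0 →
      kirillovTp p ψ α (fun z => kirillovPhi0 p α z + kirillovPhi1 p α z) y
        = 2 * α * (kirillovPhi0 p α y + kirillovPhi1 p α y) := by
  intro y hy
  have hp : (p : ℚ_[p]) ≠ 0 := NeZero.ne _
  simp only [kirillovTp]
  rw [kirillovPhi0_add_kirillovPhi1 α (mul_ne_zero (inv_ne_zero hp) hy),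
    kirillovPhi0_add_kirillovPhi1 α (mul_ne_zero hp hy), kirillovPhi0_add_kirillovPhi1 α hy,
    Padic.valuation_inv_p_mul hy, Padic.valuation_p_mul hy]
  rcases lt_or_ge (y.valuation + 1) 0 with hv | hv
  · simp [newformCoeff_of_neg α hv, newformCoeff_of_neg α (show y.valuation < 0 by omega),
      newformCoeff_of_neg α (show y.valuation - 1 < 0 by omega)]
  · let χ : AddChar ℚ_[p] ℂ :=
      { toFun := ψ, map_zero_eq_one' := (hψ_ker 0).2 (by simp), map_add_eq_mul' := hψ_add }
    have hsum : ∑ c ∈ Finset.range p, ψ (c * y) = if 0 ≤ y.valuation then (p : ℂ) else 0 := by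
      have hpy : ‖(p : ℚ_[p]) * y‖ ≤ 1 := by
        rwa [Padic.norm_le_one_iff_val_nonneg, Padic.valuation_p_mul hy]
      have h := sum_range_addChar_natCast_mul χ hψ_ker hpy
      simp only [Padic.norm_le_one_iff_val_nonneg] at h
      exact h
    rw [← newformCoeff_sub_one_add_mul α hα, hsum]
    split_ifs
    · field_simp [(Fact.out : p.Prime).ne_zero]
    · simp

/-- **Section 5.1 of the paper:** `T_p(φ₀ + φ₁) = 2α (φ₀ + φ₁)` on `ℚ_p^×`: the new
vector `φ₀ + φ₁` is a `T_p`-eigenvector with eigenvalue `a_p = 2α` (the double-root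
situation).  Here `ψ` is a nontrivial additive character of `ℚ_p` with kernel exactly
`ℤ_p` and `α ∈ ℂ^×`. -/
theorem Tp_eigenvector_phi0_add_phi1
    (p : ℕ) [Fact p.Prime]
    -- additive character with kernel ℤ_p
    (ψ : ℚ_[p] → ℂ) (hψ_cont : Continuous ψ)
    (hψ_add : ∀ x y : ℚ_[p], ψ (x + y) = ψ x * ψ y)
    (hψ_ker : ∀ x : ℚ_[p], ψ x = 1 ↔ ‖x‖ ≤ 1)
    (α : ℂ) (hα : α ≠ 0) :
    ∀ y : ℚ_[p], y ≠ 0 →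
      kirillovTp p ψ α (fun z => kirillovPhi0 p α z + kirillovPhi1 p α z) y
        = 2 * α * (kirillovPhi0 p α y + kirillovPhi1 p α y) :=
  Tp_eigenvector_phi0_add_phi1_general p ψ hψ_add hψ_ker α hα
end
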